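/- Let x = 0.b₁b₂…b_m be a number with finite binary expansion of length m in (0,1), and let g be the digit-interleaving function g(x) = 0.b₁0b₂0…0b_m. Let x_i = x − 2^{−m−i}. Then lim_{i→∞} g(x_i) = g(x − 2^{−m}) + 1/(3·2^{2m−1}), which differs from g(x); hence g(lim x_i) ≠ lim g(x_i). -/

import Mathlib

/-!
The hypothesis on the digits makes `x = n / 2^m` a dyadic rational. Then
`x - 2^(-m-i) = (n 2^i - 1) / 2^(m+i)` has the first `m` digits of `x - 2^(-m) = (n - 1) / 2^m`
followed by `i` ones, so `g(x - 2^(-m-i)) = g(x - 2^(-m)) + ∑_{t<i} 2^(-(2(m+t)+1))`, and the sum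
tends to the geometric tail `1 / (3·2^(2m-1))`. On the other hand `g` maps every dyadic rational
with `m` digits into `2^(-(2m-1)) ℕ`, so `g x` lies in this set while
`g(x - 2^(-m)) + 1 / (3·2^(2m-1))` does not.
-/

/-- The `i`-th digit (`i ≥ 1`) of the canonical binary expansion of `x ∈ [0,1)`. -/
noncomputable def binDigit (x : ℝ) (i : ℕ) : ℕ := ⌊x * 2 ^ i⌋.toNat % 2

/-- The interleaving function `g(0.b₁b₂b₃…) = 0.b₁0b₂0b₃0…`. -/
noncomputable def interleaveZeros (x : ℝ) : ℝ :=
  ∑' i : ℕ, (binDigit x (i + 1) : ℝ) / 2 ^ (2 * i + 1)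

open Finset Filter Topology

lemma binDigit_eq_natFloor (x : ℝ) (i : ℕ) : binDigit x i = ⌊x * 2 ^ i⌋₊ % 2 := by
  rw [binDigit, Int.floor_toNat]

lemma natFloor_mul_two_pow_succ (x : ℝ) (k : ℕ) :
    ⌊x * 2 ^ (k + 1)⌋₊ = 2 * ⌊x * 2 ^ k⌋₊ + binDigit x (k + 1) := by
  have h : ⌊x * 2 ^ k⌋₊ = ⌊x * 2 ^ (k + 1)⌋₊ / 2 := by
    rw [← Nat.floor_div_ofNat, pow_succ, mul_div_assoc, mul_div_cancel_right₀ _ two_ne_zero]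
  rw [binDigit_eq_natFloor, h]
  omega

lemma natFloor_mul_two_pow_add {x : ℝ} {m : ℕ} (hfin : ∀ i > m, binDigit x i = 0) (j : ℕ) :
    ⌊x * 2 ^ (m + j)⌋₊ = 2 ^ j * ⌊x * 2 ^ m⌋₊ := by
  induction j with
  | zero => simp
  | succ j ih =>
    rw [← add_assoc, natFloor_mul_two_pow_succ, ih, hfin _ (by omega)]
    ring

lemma eq_natFloor_mul_two_pow_div {x : ℝ} {m : ℕ} (hx : 0 ≤ x)
    (hfin : ∀ i > m, binDigit x i = 0) : x = ⌊x * 2 ^ m⌋₊ / 2 ^ m := by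
  set n := ⌊x * 2 ^ m⌋₊
  have hn : (n : ℝ) ≤ x * 2 ^ m := Nat.floor_le (by positivity)
  -- the digits beyond `m` vanish, so multiplying by `2 ^ j` cannot push this error past `1`
  have hsmall : ∀ j : ℕ, 2 ^ j * (x * 2 ^ m - n) < 1 := by
    intro j
    have h := Nat.lt_floor_add_one (x * 2 ^ (m + j))
    rw [natFloor_mul_two_pow_add hfin, pow_add] at h
    push_cast at h
    linarith
  have hzero : x * 2 ^ m - n ≤ 0 := by
    by_contra! hpos
    obtain ⟨j, hj⟩ := exists_nat_gt (1 / (x * 2 ^ m - n))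
    have hj2 : (j : ℝ) < 2 ^ j := by exact_mod_cast Nat.lt_two_pow_self
    have := hsmall j
    rw [div_lt_iff₀ hpos] at hj
    nlinarith
  field_simp
  linarith

lemma binDigit_natCast_div_two_pow (k N i : ℕ) :
    binDigit ((k : ℝ) / 2 ^ N) i = k * 2 ^ i / 2 ^ N % 2 := by
  rw [binDigit_eq_natFloor, div_mul_eq_mul_div]
  exact_mod_cast congrArg (· % 2) (Nat.floor_div_eq_div (K := ℝ) (k * 2 ^ i) (2 ^ N))

lemma binDigit_natCast_div_two_pow_of_le {k N i : ℕ} (hi : i ≤ N) :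
    binDigit ((k : ℝ) / 2 ^ N) i = k / 2 ^ (N - i) % 2 := by
  rw [binDigit_natCast_div_two_pow, ← Nat.add_sub_cancel' hi, pow_add, ← Nat.div_div_eq_div_mul,
    Nat.mul_div_cancel _ (by positivity), Nat.add_sub_cancel_left]

lemma binDigit_natCast_div_two_pow_of_lt {k N i : ℕ} (hi : N < i) :
    binDigit ((k : ℝ) / 2 ^ N) i = 0 := by
  rw [binDigit_natCast_div_two_pow, ← Nat.add_sub_cancel' hi.le, pow_add, ← mul_assoc,
    mul_right_comm, Nat.mul_div_cancel _ (by positivity), Nat.mul_mod, Nat.pow_mod]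
  simp [Nat.zero_pow (Nat.sub_pos_of_lt hi)]

lemma interleaveZeros_eq_sum_range {x : ℝ} {N : ℕ} (hfin : ∀ i > N, binDigit x i = 0) :
    interleaveZeros x = ∑ t ∈ range N, (binDigit x (t + 1) : ℝ) / 2 ^ (2 * t + 1) :=
  tsum_eq_sum fun t ht => by simp [hfin (t + 1) (by simpa using ht)]

lemma exists_interleaveZeros_eq_natCast_div {x : ℝ} {N : ℕ} (hN : 0 < N)
    (hfin : ∀ i > N, binDigit x i = 0) :
    ∃ A : ℕ, interleaveZeros x = A / 2 ^ (2 * N - 1) := by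
  refine ⟨∑ t ∈ range N, binDigit x (t + 1) * 2 ^ (2 * (N - 1 - t)), ?_⟩
  rw [interleaveZeros_eq_sum_range hfin]
  push_cast
  rw [sum_div]
  refine sum_congr rfl fun t ht => ?_
  have hsplit : (2 : ℝ) ^ (2 * N - 1) = 2 ^ (2 * (N - 1 - t)) * 2 ^ (2 * t + 1) := by
    rw [← pow_add]; congr 1; have := mem_range.1 ht; omega
  rw [hsplit, mul_comm (binDigit x (t + 1) : ℝ), mul_div_mul_left _ _ (by positivity)]

lemma Nat.mul_sub_one_div (a : ℕ) {b : ℕ} (hb : 0 < b) : (a * b - 1) / b = a - 1 := by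
  rcases Nat.eq_zero_or_pos a with rfl | ha
  · simp
  have hab : b ≤ a * b := Nat.le_mul_of_pos_left b ha
  apply Nat.div_eq_of_lt_le
  · rw [Nat.sub_one_mul]; omega
  · rw [Nat.sub_add_cancel ha]; omega

lemma natCast_div_two_pow_sub_two_pow {n : ℕ} (hn : 1 ≤ n) (m i : ℕ) :
    (n : ℝ) / 2 ^ m - 1 / 2 ^ (m + i) = ((n * 2 ^ i - 1 : ℕ) : ℝ) / 2 ^ (m + i) := by
  rw [Nat.cast_sub (Nat.one_le_iff_ne_zero.2 (by positivity)), pow_add]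
  push_cast
  field_simp

lemma binDigit_pred_mul_two_pow_div_of_le {n m i j : ℕ} (hj : j ≤ m) :
    binDigit (((n * 2 ^ i - 1 : ℕ) : ℝ) / 2 ^ (m + i)) j =
      binDigit (((n - 1 : ℕ) : ℝ) / 2 ^ m) j := by
  rw [binDigit_natCast_div_two_pow_of_le (by omega), binDigit_natCast_div_two_pow_of_le hj,
    show m + i - j = i + (m - j) by omega, pow_add, ← Nat.div_div_eq_div_mul,
    Nat.mul_sub_one_div _ (by positivity)]

lemma binDigit_pred_mul_two_pow_div_of_lt {n m i j : ℕ} (hn : 1 ≤ n) (hmj : m < j)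
    (hj : j ≤ m + i) :
    binDigit (((n * 2 ^ i - 1 : ℕ) : ℝ) / 2 ^ (m + i)) j = 1 := by
  have hsplit : n * 2 ^ i = n * 2 ^ (j - m) * 2 ^ (m + i - j) := by
    rw [mul_assoc, ← pow_add]; congr 2; omega
  rw [binDigit_natCast_div_two_pow_of_le hj, hsplit, Nat.mul_sub_one_div _ (by positivity)]
  have heven : 2 ∣ n * 2 ^ (j - m) := dvd_mul_of_dvd_right (dvd_pow_self 2 (by omega)) n
  have hpos : 0 < n * 2 ^ (j - m) := by positivity
  omega

lemma interleaveZeros_natCast_div_two_pow_sub {n : ℕ} (hn : 1 ≤ n) (m i : ℕ) :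
    interleaveZeros ((n : ℝ) / 2 ^ m - 1 / 2 ^ (m + i)) =
      interleaveZeros (((n - 1 : ℕ) : ℝ) / 2 ^ m) +
        ∑ t ∈ range i, (1 : ℝ) / 2 ^ (2 * (m + t) + 1) := by
  rw [natCast_div_two_pow_sub_two_pow hn,
    interleaveZeros_eq_sum_range fun _ => binDigit_natCast_div_two_pow_of_lt,
    interleaveZeros_eq_sum_range fun _ => binDigit_natCast_div_two_pow_of_lt, sum_range_add]
  congr 1
  · refine sum_congr rfl fun t ht => ?_
    rw [binDigit_pred_mul_two_pow_div_of_le (mem_range.1 ht)]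
  · refine sum_congr rfl fun t ht => ?_
    rw [binDigit_pred_mul_two_pow_div_of_lt hn (by omega) (by simpa using ht), Nat.cast_one]

lemma hasSum_one_div_two_pow_two_mul_add_one {m : ℕ} (hm : 0 < m) :
    HasSum (fun t : ℕ => (1 : ℝ) / 2 ^ (2 * (m + t) + 1)) (1 / (3 * 2 ^ (2 * m - 1))) := by
  obtain ⟨k, rfl⟩ : ∃ k, m = k + 1 := ⟨m - 1, by omega⟩
  have hterm : (fun t : ℕ => (1 : ℝ) / 2 ^ (2 * (k + 1 + t) + 1)) =
      fun t => 1 / 2 ^ (2 * k + 3) * (1 / 4) ^ t := by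
    funext t
    rw [show (4 : ℝ) = 2 ^ 2 by norm_num, div_pow, one_pow, ← pow_mul, mul_one_div, div_div,
      ← pow_add]
    ring_nf
  have hsum : (1 : ℝ) / (3 * 2 ^ (2 * (k + 1) - 1)) = 1 / 2 ^ (2 * k + 3) * (1 - 1 / 4)⁻¹ := by
    rw [show 2 * (k + 1) - 1 = 2 * k + 1 by omega, pow_succ, pow_succ]
    field_simp
    ring
  rw [hterm, hsum]
  exact (hasSum_geometric_of_lt_one (by norm_num) (by norm_num)).mul_left _

lemma natCast_div_two_pow_add_one_div_three_mul_ne (A B e : ℕ) :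
    (B : ℝ) / 2 ^ e + 1 / (3 * 2 ^ e) ≠ A / 2 ^ e := by
  intro h
  have h3 : (3 * B + 1 : ℝ) = 3 * A := by
    field_simp at h
    linarith
  norm_cast at h3
  omega

open Filter in
/-- If `x = 0.b₁…b_m` has a finite binary expansion of length `m` and
`x_i = x - 2^{-m-i}`, then `lim g(x_i) = g(x - 2^{-m}) + 1/(3·2^{2m-1}) ≠ g(x)`;
hence `g(lim x_i) ≠ lim g(x_i)`. -/
theorem interleaveZeros_not_continuous_at_finite_expansion
    (m : ℕ) (hm : 0 < m) (x : ℝ) (hx : x ∈ Set.Ioo (0 : ℝ) 1)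
    (hfin : ∀ i > m, binDigit x i = 0) :
    Tendsto (fun i : ℕ => interleaveZeros (x - 1 / 2 ^ (m + i))) atTop
      (nhds (interleaveZeros (x - 1 / 2 ^ m) + 1 / (3 * 2 ^ (2 * m - 1)))) ∧
    interleaveZeros (x - 1 / 2 ^ m) + 1 / (3 * 2 ^ (2 * m - 1)) ≠ interleaveZeros x := by
  obtain ⟨n, rfl⟩ : ∃ n : ℕ, x = n / 2 ^ m :=
    ⟨_, eq_natFloor_mul_two_pow_div hx.1.le hfin⟩
  have hn : 1 ≤ n := by
    have := (div_pos_iff_of_pos_right (by positivity)).1 hx.1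
    exact_mod_cast this
  have hshift := interleaveZeros_natCast_div_two_pow_sub hn m
  have hstart : interleaveZeros ((n : ℝ) / 2 ^ m - 1 / 2 ^ m) =
      interleaveZeros (((n - 1 : ℕ) : ℝ) / 2 ^ m) := by
    simpa using hshift 0
  rw [hstart]
  refine ⟨?_, ?_⟩
  · exact ((hasSum_one_div_two_pow_two_mul_add_one hm).tendsto_sum_nat.const_add _).congr
      fun i => (hshift i).symm
  · obtain ⟨A, hA⟩ := exists_interleaveZeros_eq_natCast_div hm
      fun _ => binDigit_natCast_div_two_pow_of_lt (k := n)
    obtain ⟨B, hB⟩ := exists_interleaveZeros_eq_natCast_div hm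
      fun _ => binDigit_natCast_div_two_pow_of_lt (k := n - 1)
    rw [hA, hB]
    exact natCast_div_two_pow_add_one_div_three_mul_ne A B _
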